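/- arXiv:1901.02787 — 8 statements merged into one kernel-verified Lean document; each statement's English description precedes it below -/
import Mathlib

section
/- Let V be a k × t Vandermonde matrix over 𝔽_q built from t distinct elements with k < t, and let M ⊆ {1,…,t} with |M| ≥ k. Let C_M be the (t - |M|) × t matrix whose rows are the standard basis vectors e_j for j ∉ M. Then the stacked matrix [V; C_M] has full row rank k + t - |M|, and consequently its right null space has dimension |M| - k. -/
/-
A linear relation among the rows of `[V; C_M]` has, in every column `j ∈ M`, no contribution
from `C_M`, so its Vandermonde part vanishes at the `|M| ≥ k` distinct nodes `α j` and hence is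
trivial; the remaining relation among distinct standard basis vectors is trivial as well.
Rank–nullity then gives the dimension of the null space.
-/

open Matrix

/-- The stacked matrix `[V; C_M]`: the Vandermonde rows `α_j ^ i`
(`0 ≤ i ≤ k-1`) on top of the standard basis rows `e_j` for `j ∉ M`. -/
def stackedMat {F : Type*} [Field F] (k t : ℕ) (α : Fin t → F)
    (M : Finset (Fin t)) :
    Matrix (Fin k ⊕ {j : Fin t // j ∉ M}) (Fin t) F :=
  Matrix.of (Sum.elim (fun i j => α j ^ (i : ℕ))
    (fun r j => if j = r.1 then 1 else 0))

theorem Matrix.eq_zero_of_forall_mem_sum_mul_pow_eq_zero {R ι : Type*} [CommRing R] [IsDomain R]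
    {k : ℕ} {α : ι → R} {M : Finset ι} (hα : Set.InjOn α M) (hM : k ≤ M.card)
    {c : Fin k → R} (hc : ∀ j ∈ M, ∑ i, c i * α j ^ (i : ℕ) = 0) : c = 0 := by
  -- restrict to `k` of the nodes, where the Vandermonde matrix is square and invertible
  let e : Fin k ↪ M := (Fin.castLEEmb (by simpa using hM)).trans M.equivFin.symm.toEmbedding
  refine eq_zero_of_forall_index_sum_mul_pow_eq_zero (f := fun i => α (e i)) ?_
    fun i => hc _ (e i).2
  intro a b hab
  exact e.injective (Subtype.ext (hα (e a).2 (e b).2 hab))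

section Stacked

variable {F : Type*} [Field F] {k t : ℕ} {α : Fin t → F} {M : Finset (Fin t)}

theorem vecMul_stackedMat_apply (g : Fin k ⊕ {j : Fin t // j ∉ M} → F) (j : Fin t) :
    (g ᵥ* stackedMat k t α M) j =
      ∑ i, g (Sum.inl i) * α j ^ (i : ℕ) + if h : j ∈ M then 0 else g (Sum.inr ⟨j, h⟩) := by
  simp only [vecMul, dotProduct, Fintype.sum_sum_type, stackedMat, of_apply, Sum.elim_inl,
    Sum.elim_inr, mul_ite, mul_one, mul_zero]
  congr 1
  split_ifs with h
  · exact Finset.sum_eq_zero fun r _ => if_neg fun hjr : j = r => r.2 (hjr ▸ h)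
  · rw [Finset.sum_eq_single_of_mem ⟨j, h⟩ (Finset.mem_univ _) fun r _ hr =>
      if_neg fun hjr => hr (Subtype.ext hjr.symm), if_pos rfl]

theorem linearIndependent_stackedMat_row (hα : Function.Injective α) (hM : k ≤ M.card) :
    LinearIndependent F (stackedMat k t α M).row := by
  rw [← vecMul_injective_iff]
  refine (injective_iff_map_eq_zero (vecMulLinear (stackedMat k t α M))).2 fun g hg => ?_
  have hcol j := congrFun hg j
  simp only [coe_vecMulLinear, vecMul_stackedMat_apply, Pi.zero_apply] at hcol
  have hV : g ∘ Sum.inl = 0 :=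
    eq_zero_of_forall_mem_sum_mul_pow_eq_zero hα.injOn hM fun j hj => by
      simpa [hj] using hcol j
  ext (i | r)
  · exact congrFun hV i
  · simpa [r.2, show ∀ i, g (Sum.inl i) = 0 from congrFun hV] using hcol r.1

end Stacked

theorem stacked_full_row_rank_general {F : Type*} [Field F]
    (k t : ℕ) (α : Fin t → F) (hα : Function.Injective α)
    (M : Finset (Fin t)) (hM : k ≤ M.card) :
    (stackedMat k t α M).rank = k + (t - M.card) ∧
      Module.finrank F
        ↥(LinearMap.ker (stackedMat k t α M).mulVecLin) = M.card - k := by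
  have hrank : (stackedMat k t α M).rank = k + (t - M.card) := by
    rw [(linearIndependent_stackedMat_row hα hM).rank_matrix, Fintype.card_sum, Fintype.card_fin,
      Fintype.card_subtype_compl, Fintype.card_coe, Fintype.card_fin]
  have hMt : M.card ≤ t := by simpa using M.card_le_univ
  have hnullity := LinearMap.finrank_range_add_finrank_ker (stackedMat k t α M).mulVecLin
  rw [Module.finrank_fin_fun] at hnullity
  exact ⟨hrank, by rw [rank] at hrank; omega⟩

/-- If `|M| ≥ k`, the stacked matrix `[V; C_M]` has full row
rank `k + t - |M|`, hence its right null space has dimension `|M| - k`. -/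
theorem stacked_full_row_rank {F : Type*} [Field F] [Fintype F]
    (k t : ℕ) (hkt : k < t) (α : Fin t → F) (hα : Function.Injective α)
    (M : Finset (Fin t)) (hM : k ≤ M.card) :
    (stackedMat k t α M).rank = k + (t - M.card) ∧
      Module.finrank F
        ↥(LinearMap.ker (stackedMat k t α M).mulVecLin) = M.card - k :=
  stacked_full_row_rank_general k t α hα M hM
end

section
/- Let V be a k × t Vandermonde matrix over 𝔽_q built from t distinct elements, let M ⊆ {1,…,t}, and let C_M be the matrix with rows {e_j : j ∉ M}. If |M| < k, then the stacked matrix [V; C_M] has rank t, i.e., its right null space is trivial. -/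
open Matrix

/-- If `|M| < k`, the stacked matrix `[V; C_M]` has rank `t`,
i.e. its right null space is trivial. -/
theorem stacked_rank_t_of_card_lt {F : Type*} [Field F] [Fintype F]
    (k t : ℕ) (hkt : k < t) (α : Fin t → F) (hα : Function.Injective α)
    (M : Finset (Fin t)) (hM : M.card < k) :
    (stackedMat k t α M).rank = t ∧
      LinearMap.ker (stackedMat k t α M).mulVecLin = ⊥ := by
  have hker : LinearMap.ker (stackedMat k t α M).mulVecLin = ⊥ := by
    rw [LinearMap.ker_eq_bot']
    intro x hx
    have hx' : ∀ r, (stackedMat k t α M).mulVec x r = 0 := fun r => congrFun hx r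
    have hout : ∀ j ∉ M, x j = 0 := by
      intro j hj
      have h := hx' (Sum.inr ⟨j, hj⟩)
      simpa [stackedMat, mulVec, dotProduct, ite_mul] using h
    -- restrict to M
    set e := M.equivFin.symm with he
    have hMy : (fun j : Fin M.card => x (e j).1) = 0 := by
      apply eq_zero_of_forall_pow_sum_mul_pow_eq_zero
        (f := fun j : Fin M.card => α (e j).1)
      · intro a b hab
        have := hα hab
        exact e.injective (Subtype.ext this)
      · intro i
        have hik : (i : ℕ) < k := lt_trans i.isLt hM
        have h := hx' (Sum.inl ⟨i, hik⟩)
        have hsum : ∑ j : Fin t, α j ^ (i : ℕ) * x j = 0 := by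
          simpa [stackedMat, mulVec, dotProduct] using h
        have hsub : ∑ j ∈ M, α j ^ (i : ℕ) * x j
            = ∑ j ∈ Finset.univ, α j ^ (i : ℕ) * x j :=
          Finset.sum_subset (Finset.subset_univ M)
            (fun j _ hj => by simp [hout j hj])
        have hsumM : ∑ j ∈ M, α j ^ (i : ℕ) * x j = 0 := by
          rw [hsub]; exact hsum
        calc ∑ j : Fin M.card, x (e j).1 * α (e j).1 ^ (i : ℕ)
            = ∑ j : Fin M.card, α (e j).1 ^ (i : ℕ) * x (e j).1 := by
              simp [mul_comm]
          _ = ∑ j : {x // x ∈ M}, α j.1 ^ (i : ℕ) * x j.1 :=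
              e.sum_comp (fun j : {x // x ∈ M} => α j.1 ^ (i : ℕ) * x j.1)
          _ = ∑ j ∈ M, α j ^ (i : ℕ) * x j := Finset.sum_coe_sort M (fun j => α j ^ (i : ℕ) * x j)
          _ = 0 := hsumM
    funext j
    by_cases hj : j ∈ M
    · have := congrFun hMy (e.symm ⟨j, hj⟩)
      simpa using this
    · exact hout j hj
  refine ⟨?_, hker⟩
  have hinj : Function.Injective (stackedMat k t α M).mulVecLin :=
    LinearMap.ker_eq_bot.mp hker
  rw [Matrix.rank]
  rw [LinearMap.finrank_range_of_inj hinj]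
  simp
end

section
/- Let V be a k × t Vandermonde matrix over 𝔽_q built from t distinct points, and for a subset M ⊆ {1,…,t} let N_M denote the right null space of the matrix [V; C_M], where C_M has rows {e_j : j ∉ M}. Then dim N_M = max(|M| - k, 0). -/
open Matrix

private lemma vand_sq_unit {F : Type*} [Field F] {m : ℕ} (β : Fin m → F)
    (hβ : Function.Injective β) :
    IsUnit (Matrix.of fun (i j : Fin m) => β j ^ (i : ℕ)) := by
  have h : (Matrix.of fun (i j : Fin m) => β j ^ (i : ℕ)) = (Matrix.vandermonde β)ᵀ := by
    ext i j; simp [Matrix.vandermonde]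
  rw [h, Matrix.isUnit_iff_isUnit_det, Matrix.det_transpose]
  exact (Matrix.det_vandermonde_ne_zero_iff.mpr hβ).isUnit

private lemma vand_ker_finrank {F : Type*} [Field F] (k m : ℕ) (β : Fin m → F)
    (hβ : Function.Injective β) :
    Module.finrank F
      ↥(LinearMap.ker (Matrix.of fun (i : Fin k) (j : Fin m) => β j ^ (i : ℕ)).mulVecLin)
      = m - k := by
  set W : Matrix (Fin k) (Fin m) F := Matrix.of fun i j => β j ^ (i : ℕ) with hW
  rcases le_total m k with h | h
  · -- kernel is trivial
    have hker : LinearMap.ker W.mulVecLin = ⊥ := by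
      rw [LinearMap.ker_eq_bot']
      intro x hx
      have hVsq := vand_sq_unit β hβ
      have hinv : Invertible (Matrix.of fun (i j : Fin m) => β j ^ (i : ℕ)) :=
        (Matrix.of fun (i j : Fin m) => β j ^ (i : ℕ)).invertibleOfIsUnitDet
          ((Matrix.isUnit_iff_isUnit_det _).mp hVsq)
      apply Matrix.mulVec_injective_of_invertible (Matrix.of fun (i j : Fin m) => β j ^ (i : ℕ))
      rw [Matrix.mulVec_zero]
      ext i
      have := congrFun (hx : W.mulVec x = 0) (Fin.castLE h i)
      simpa [Matrix.mulVec, dotProduct, hW] using this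
    rw [hker]
    simp [Nat.sub_eq_zero_of_le h]
  · -- surjective, rank-nullity
    set γ : Fin k → F := β ∘ Fin.castLE h with hγ
    have hγinj : Function.Injective γ := hβ.comp (Fin.castLE_injective h)
    have hVsq := vand_sq_unit γ hγinj
    have hinv : Invertible (Matrix.of fun (i j : Fin k) => γ j ^ (i : ℕ)) :=
      (Matrix.of fun (i j : Fin k) => γ j ^ (i : ℕ)).invertibleOfIsUnitDet
        ((Matrix.isUnit_iff_isUnit_det _).mp hVsq)
    set E : Matrix (Fin m) (Fin k) F :=
      Matrix.of fun j i => if j = Fin.castLE h i then (1 : F) else 0 with hE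
    have hWE : W * E = Matrix.of fun (i j : Fin k) => γ j ^ (i : ℕ) := by
      ext i i'
      simp [Matrix.mul_apply, hW, hE, hγ, mul_ite, mul_one, mul_zero]
    have hsurj : Function.Surjective W.mulVecLin := by
      intro y
      obtain ⟨z, hz⟩ := Matrix.mulVec_surjective_of_invertible
        (Matrix.of fun (i j : Fin k) => γ j ^ (i : ℕ)) y
      exact ⟨E.mulVec z, by
        simp only [Matrix.mulVecLin_apply, Matrix.mulVec_mulVec, hWE, hz]⟩
    have hrn := LinearMap.finrank_range_add_finrank_ker W.mulVecLin
    rw [LinearMap.range_eq_top.mpr hsurj] at hrn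
    simp only [finrank_top] at hrn
    have h1 : Module.finrank F (Fin k → F) = k := by simp
    have h2 : Module.finrank F (Fin m → F) = m := by simp
    omega

/-- `dim N_M = max(|M| - k, 0)` (truncated subtraction in ℕ). -/
theorem dim_nullspace_stacked {F : Type*} [Field F] [Fintype F]
    (k t : ℕ) (hkt : k ≤ t) (α : Fin t → F) (hα : Function.Injective α)
    (M : Finset (Fin t)) :
    Module.finrank F
      ↥(LinearMap.ker (stackedMat k t α M).mulVecLin) = M.card - k := by
  classical
  set S := stackedMat k t α M with hS
  set e := M.orderIsoOfFin rfl with he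
  set β : Fin M.card → F := fun j => α (e j) with hβdef
  have hβ : Function.Injective β := by
    intro a b hab
    exact e.injective (Subtype.ext (hα hab))
  set W : Matrix (Fin k) (Fin M.card) F := Matrix.of fun i j => β j ^ (i : ℕ) with hW
  -- membership characterization of ker S
  have hmemS : ∀ x : Fin t → F, x ∈ LinearMap.ker S.mulVecLin ↔
      ((∀ j ∉ M, x j = 0) ∧ ∀ i : Fin k, ∑ j, α j ^ (i : ℕ) * x j = 0) := by
    intro x
    rw [LinearMap.mem_ker, Matrix.mulVecLin_apply]
    constructor
    · intro hx
      constructor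
      · intro j hj
        have := congrFun hx (Sum.inr ⟨j, hj⟩)
        simpa [hS, stackedMat, Matrix.mulVec, dotProduct, ite_mul, one_mul,
          zero_mul] using this
      · intro i
        have := congrFun hx (Sum.inl i)
        simpa [hS, stackedMat, Matrix.mulVec, dotProduct] using this
    · rintro ⟨h1, h2⟩
      ext r
      rcases r with i | r
      · simpa [hS, stackedMat, Matrix.mulVec, dotProduct] using h2 i
      · simpa [hS, stackedMat, Matrix.mulVec, dotProduct, ite_mul, one_mul,
          zero_mul] using h1 r.1 r.2
  have hmemW : ∀ y : Fin M.card → F, y ∈ LinearMap.ker W.mulVecLin ↔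
      ∀ i : Fin k, ∑ j, β j ^ (i : ℕ) * y j = 0 := by
    intro y
    rw [LinearMap.mem_ker, Matrix.mulVecLin_apply]
    constructor
    · intro hy i
      have := congrFun hy i
      simpa [hW, Matrix.mulVec, dotProduct] using this
    · intro hy
      ext i
      simpa [hW, Matrix.mulVec, dotProduct] using hy i
  -- sum reindexing
  have hsum : ∀ (x : Fin t → F) (i : Fin k), (∀ j ∉ M, x j = 0) →
      ∑ j, β j ^ (i : ℕ) * x (e j) = ∑ j, α j ^ (i : ℕ) * x j := by
    intro x i hx
    have h1 : ∑ j, β j ^ (i : ℕ) * x (e j)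
        = ∑ s : {j : Fin t // j ∈ M}, α s ^ (i : ℕ) * x s :=
      Fintype.sum_equiv e.toEquiv _ _ (fun j => rfl)
    rw [h1]
    rw [Finset.sum_coe_sort M (fun s => α s ^ (i : ℕ) * x s)]
    apply Finset.sum_subset (Finset.subset_univ M)
    intro j _ hj
    rw [hx j hj, mul_zero]
  -- the two linear maps
  set f : (Fin t → F) →ₗ[F] (Fin M.card → F) :=
    LinearMap.funLeft F F (fun j => (e j : Fin t)) with hf
  set g : (Fin M.card → F) →ₗ[F] (Fin t → F) :=
    { toFun := fun y j => if h : j ∈ M then y (e.symm ⟨j, h⟩) else 0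
      map_add' := by intro y z; ext j; by_cases h : j ∈ M <;> simp [h]
      map_smul' := by intro c y; ext j; by_cases h : j ∈ M <;> simp [h] } with hg
  have hge : ∀ (y : Fin M.card → F) (j : Fin M.card), g y (e j : Fin t) = y j := by
    intro y j
    have hm : (e j : Fin t) ∈ M := (e j).2
    simp only [hg, LinearMap.coe_mk, AddHom.coe_mk, dif_pos hm]
    congr 1
    have h2 : (⟨(e j : Fin t), hm⟩ : {x // x ∈ M}) = e j := Subtype.ext rfl
    rw [h2, OrderIso.symm_apply_apply]
  have hg0 : ∀ (y : Fin M.card → F) (j : Fin t), j ∉ M → g y j = 0 := by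
    intro y j hj
    simp only [hg, LinearMap.coe_mk, AddHom.coe_mk, dif_neg hj]
  have hfapp : ∀ (x : Fin t → F) (j : Fin M.card), f x j = x (e j : Fin t) := fun _ _ => rfl
  have hfker : ∀ x ∈ LinearMap.ker S.mulVecLin, f x ∈ LinearMap.ker W.mulVecLin := by
    intro x hx
    obtain ⟨h1, h2⟩ := (hmemS x).mp hx
    rw [hmemW]
    intro i
    calc ∑ j, β j ^ (i : ℕ) * f x j = ∑ j, β j ^ (i : ℕ) * x (e j : Fin t) := by
          simp only [hfapp]
      _ = ∑ j, α j ^ (i : ℕ) * x j := hsum x i h1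
      _ = 0 := h2 i
  have hgker : ∀ y ∈ LinearMap.ker W.mulVecLin, g y ∈ LinearMap.ker S.mulVecLin := by
    intro y hy
    rw [hmemS]
    refine ⟨hg0 y, fun i => ?_⟩
    calc ∑ j, α j ^ (i : ℕ) * g y j
        = ∑ j, β j ^ (i : ℕ) * g y (e j : Fin t) := (hsum (g y) i (hg0 y)).symm
      _ = ∑ j, β j ^ (i : ℕ) * y j := by simp only [hge]
      _ = 0 := (hmemW y).mp hy i
  have hfg : ∀ y, f (g y) = y := by
    intro y; ext j
    rw [hfapp, hge]
  have hgf : ∀ x : Fin t → F, (∀ j ∉ M, x j = 0) → g (f x) = x := by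
    intro x hx; ext j
    by_cases h : j ∈ M
    · simp only [hg, LinearMap.coe_mk, AddHom.coe_mk, dif_pos h]
      rw [hfapp]
      congr 1
      exact congrArg Subtype.val (e.apply_symm_apply ⟨j, h⟩)
    · rw [hg0 _ _ h, hx j h]
  let eqv : ↥(LinearMap.ker S.mulVecLin) ≃ₗ[F] ↥(LinearMap.ker W.mulVecLin) :=
    LinearEquiv.ofLinear (f.restrict hfker) (g.restrict hgker)
      (by
        apply LinearMap.ext
        rintro ⟨y, hy⟩
        apply Subtype.ext
        simpa [LinearMap.restrict_apply] using hfg y)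
      (by
        apply LinearMap.ext
        rintro ⟨x, hx⟩
        apply Subtype.ext
        simpa [LinearMap.restrict_apply] using hgf x ((hmemS x).mp hx).1)
  rw [eqv.finrank_eq]
  exact vand_ker_finrank k M.card β hβ
end

section
/- With V a k × t Vandermonde matrix over 𝔽_q built from t distinct points and null spaces N_M defined as N_M = ker[V; C_{M}], for any two subsets M₁, M₂ ⊆ {1,…,t} the intersection N_{M₁} ∩ N_{M₂} equals N_{M₁ ∩ M₂}, and hence dim(N_{M₁} ∩ N_{M₂}) = max(|M₁ ∩ M₂| - k, 0). -/
open Matrix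

section Aux

variable {F : Type*} [Field F] {k t : ℕ} (α : Fin t → F) (M : Finset (Fin t))

lemma mem_ker_stacked (x : Fin t → F) :
    x ∈ LinearMap.ker (stackedMat k t α M).mulVecLin ↔
      (∀ i : Fin k, ∑ j, α j ^ (i : ℕ) * x j = 0) ∧ ∀ j ∉ M, x j = 0 := by
  rw [LinearMap.mem_ker, mulVecLin_apply, funext_iff]
  constructor
  · intro h
    refine ⟨fun i => ?_, fun j hj => ?_⟩
    · simpa [stackedMat, mulVec, dotProduct] using h (Sum.inl i)
    · simpa [stackedMat, mulVec, dotProduct, ite_mul] using h (Sum.inr ⟨j, hj⟩)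
  · rintro ⟨h1, h2⟩ s
    rcases s with i | r
    · simpa [stackedMat, mulVec, dotProduct] using h1 i
    · simpa [stackedMat, mulVec, dotProduct, ite_mul] using h2 r.1 r.2

/-- The Vandermonde matrix restricted to the columns in `M`. -/
def subVand : Matrix (Fin k) {j : Fin t // j ∈ M} F :=
  Matrix.of fun i j => α j.1 ^ (i : ℕ)

/-- Extension by zero as a linear map. -/
def extZero : ({j : Fin t // j ∈ M} → F) →ₗ[F] (Fin t → F) where
  toFun y j := if h : j ∈ M then y ⟨j, h⟩ else 0
  map_add' y z := by funext j; by_cases h : j ∈ M <;> simp [h]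
  map_smul' c y := by funext j; by_cases h : j ∈ M <;> simp [h]

lemma sum_extZero (f : Fin t → F) (y : {j : Fin t // j ∈ M} → F) :
    ∑ j, f j * extZero M y j = ∑ j : {j : Fin t // j ∈ M}, f j.1 * y j := by
  rw [← Finset.sum_subset (Finset.subset_univ M)
    (by intro j _ hj; simp [extZero, hj]),
    ← Finset.sum_attach M fun j => f j * extZero M y j,
    Finset.univ_eq_attach]
  refine Finset.sum_congr rfl fun j _ => ?_
  simp [extZero, j.2]

lemma extZero_restr (x : Fin t → F) (hx : ∀ j ∉ M, x j = 0) :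
    extZero M (fun j : {j : Fin t // j ∈ M} => x j.1) = x := by
  funext j
  by_cases h : j ∈ M <;> simp [extZero, h, hx j]

/-- Kernel of the stacked matrix is equivalent to the kernel of the restricted
Vandermonde matrix. -/
noncomputable def kerEquiv :
    LinearMap.ker (stackedMat k t α M).mulVecLin ≃ₗ[F]
      LinearMap.ker (subVand (k := k) α M).mulVecLin where
  toFun x := ⟨fun j => x.1 j.1, by
    have hx := (mem_ker_stacked α M x.1).1 x.2
    rw [LinearMap.mem_ker, mulVecLin_apply]
    funext i
    have h0 : ∑ j : {j : Fin t // j ∈ M}, α j.1 ^ (i : ℕ) * x.1 j.1 = 0 := by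
      rw [← sum_extZero M (fun j => α j ^ (i : ℕ)),
        extZero_restr M x.1 hx.2]
      exact hx.1 i
    simpa [subVand, mulVec, dotProduct] using h0⟩
  invFun y := ⟨extZero M y.1, by
    have hy := y.2
    rw [LinearMap.mem_ker, mulVecLin_apply] at hy
    rw [mem_ker_stacked]
    refine ⟨fun i => ?_, fun j hj => by simp [extZero, hj]⟩
    rw [sum_extZero M (fun j => α j ^ (i : ℕ))]
    simpa [subVand, mulVec, dotProduct] using congrFun hy i⟩
  map_add' x y := by ext j; simp
  map_smul' c x := by ext j; simp
  left_inv x := by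
    ext j
    exact congrFun (extZero_restr M x.1 ((mem_ker_stacked α M x.1).1 x.2).2) j
  right_inv y := by
    ext j
    simp [extZero, j.2]

lemma finrank_ker_subVand (hα : Function.Injective α) :
    Module.finrank F (LinearMap.ker (subVand (k := k) α M).mulVecLin) =
      M.card - k := by
  classical
  set m := M.card with hm
  have hcard : Fintype.card {j : Fin t // j ∈ M} = m := Fintype.card_coe M
  rcases le_or_gt k m with hkm | hmk
  · -- k ≤ m : the map is surjective
    obtain ⟨g⟩ : Nonempty (Fin k ↪ {j : Fin t // j ∈ M}) := by
      apply Function.Embedding.nonempty_of_card_le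
      rwa [Fintype.card_fin, hcard]
    set W : Matrix (Fin k) (Fin k) F :=
      Matrix.of fun i j => α (g j).1 ^ (i : ℕ) with hWdef
    have hW : W.det ≠ 0 := by
      have : W = (vandermonde fun j => α (g j).1)ᵀ := by
        ext i j; simp [hWdef, vandermonde]
      rw [this, det_transpose, det_vandermonde_ne_zero_iff]
      exact fun a b hab => g.injective (Subtype.ext (hα hab))
    have hsurj : Function.Surjective (subVand (k := k) α M).mulVecLin := by
      intro c
      set z := W⁻¹.mulVec c with hz
      refine ⟨fun j => ∑ i, if j = g i then z i else 0, ?_⟩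
      have h1 : (subVand (k := k) α M).mulVecLin
          (fun j => ∑ i, if j = g i then z i else 0) = W.mulVec z := by
        funext i'
        rw [mulVecLin_apply]
        simp only [subVand, mulVec, dotProduct, Matrix.of_apply, Finset.mul_sum,
          mul_ite, mul_zero]
        rw [Finset.sum_comm]
        simp [hWdef]
      rw [h1, hz, mulVec_mulVec, Matrix.mul_nonsing_inv _ (isUnit_iff_ne_zero.2 hW),
        one_mulVec]
    have hrn := LinearMap.finrank_range_add_finrank_ker
      (subVand (k := k) α M).mulVecLin
    rw [LinearMap.range_eq_top.2 hsurj, finrank_top] at hrn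
    have h2 : Module.finrank F (Fin k → F) = k := by simp
    have h3 : Module.finrank F ({j : Fin t // j ∈ M} → F) = m := by
      simp [hcard]
    omega
  · -- m < k : the map is injective
    have e : Fin m ≃ {j : Fin t // j ∈ M} :=
      (Fintype.equivFinOfCardEq hcard).symm
    set W : Matrix (Fin m) (Fin m) F :=
      Matrix.of fun i j => α (e j).1 ^ (i : ℕ) with hWdef
    have hW : W.det ≠ 0 := by
      have : W = (vandermonde fun j => α (e j).1)ᵀ := by
        ext i j; simp [hWdef, vandermonde]
      rw [this, det_transpose, det_vandermonde_ne_zero_iff]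
      exact fun a b hab => e.injective (Subtype.ext (hα hab))
    have hker : LinearMap.ker (subVand (k := k) α M).mulVecLin = ⊥ := by
      rw [Submodule.eq_bot_iff]
      intro y hy
      rw [LinearMap.mem_ker, mulVecLin_apply] at hy
      have h0 : W.mulVec (fun j => y (e j)) = 0 := by
        funext i
        have hi := congrFun hy (Fin.castLE hmk.le i)
        simp only [subVand, mulVec, dotProduct, Matrix.of_apply, Pi.zero_apply,
          Fin.coe_castLE] at hi ⊢
        rw [← Equiv.sum_comp e (fun j => α j.1 ^ (i : ℕ) * y j)] at hi
        simpa [hWdef] using hi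
      have h1 : (fun j => y (e j)) = 0 := by
        have := congrArg (W⁻¹.mulVec ·) h0
        simpa [mulVec_mulVec, Matrix.nonsing_inv_mul _ (isUnit_iff_ne_zero.2 hW),
          one_mulVec] using this
      funext j
      have := congrFun h1 (e.symm j)
      simpa using this
    rw [hker, finrank_bot]
    omega

end Aux

/-- `N_{M₁} ∩ N_{M₂} = N_{M₁ ∩ M₂}`, and hence
`dim (N_{M₁} ∩ N_{M₂}) = max(|M₁ ∩ M₂| - k, 0)`. -/
theorem nullspace_inter {F : Type*} [Field F] [Fintype F]
    (k t : ℕ) (hkt : k ≤ t) (α : Fin t → F) (hα : Function.Injective α)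
    (M₁ M₂ : Finset (Fin t)) :
    LinearMap.ker (stackedMat k t α M₁).mulVecLin ⊓
        LinearMap.ker (stackedMat k t α M₂).mulVecLin =
      LinearMap.ker (stackedMat k t α (M₁ ∩ M₂)).mulVecLin ∧
    Module.finrank F
      ↥(LinearMap.ker (stackedMat k t α M₁).mulVecLin ⊓
        LinearMap.ker (stackedMat k t α M₂).mulVecLin) =
      (M₁ ∩ M₂).card - k := by
  have heq : LinearMap.ker (stackedMat k t α M₁).mulVecLin ⊓
        LinearMap.ker (stackedMat k t α M₂).mulVecLin =
      LinearMap.ker (stackedMat k t α (M₁ ∩ M₂)).mulVecLin := by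
    ext x
    simp only [Submodule.mem_inf, mem_ker_stacked]
    constructor
    · rintro ⟨⟨h1, h1'⟩, ⟨h2, h2'⟩⟩
      refine ⟨h1, fun j hj => ?_⟩
      rw [Finset.mem_inter] at hj
      push_neg at hj
      by_cases h : j ∈ M₁
      · exact h2' j (hj h)
      · exact h1' j h
    · rintro ⟨h1, h2⟩
      exact ⟨⟨h1, fun j hj => h2 j (fun hj' => hj (Finset.mem_inter.1 hj').1)⟩,
        ⟨h1, fun j hj => h2 j (fun hj' => hj (Finset.mem_inter.1 hj').2)⟩⟩
  refine ⟨heq, ?_⟩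
  rw [heq, (kerEquiv α (M₁ ∩ M₂)).finrank_eq, finrank_ker_subVand α _ hα]
end

section
/- Let N₁ and N₂ be subspaces of a finite-dimensional vector space. For nonnegative integers R₁, R₂, one can select R₁ vectors from N₁ and R₂ vectors from N₂ such that all R₁ + R₂ selected vectors are linearly independent if and only if R₁ ≤ dim N₁, R₂ ≤ dim N₂, and R₁ + R₂ ≤ dim(N₁ + N₂). -/
/-!
Let `K = N₁ ⊓ N₂`, choose a complement `C` of `K` and put `Aᵢ = Nᵢ ⊓ C`. By the modular law
`Nᵢ = K ⊕ Aᵢ`, and `A₁`, `A₂`, `K` are independent, so `dim (N₁ ⊔ N₂) = dim K + dim A₁ + dim A₂`.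
Take the vectors of `Nᵢ` from `Aᵢ` as long as there is room there and the remaining ones, for both
`i` jointly, from `K`; the three inequalities say exactly that `K` has room for those.
-/

open Module Submodule

section

variable {F V : Type*} [Field F] [AddCommGroup V] [Module F V]

theorem LinearIndependent.card_le_finrank_of_forall_mem {ι : Type*} [Fintype ι] {v : ι → V}
    (hv : LinearIndependent F v) {p : Submodule F V} [FiniteDimensional F p] (hp : ∀ i, v i ∈ p) :
    Fintype.card ι ≤ finrank F p := by
  rw [← finrank_span_eq_card hv]
  exact Submodule.finrank_mono (span_le.2 (Set.range_subset_iff.2 hp))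

theorem exists_linearIndependent_forall_mem {ι : Type*} [Fintype ι] {p : Submodule F V}
    (h : Fintype.card ι ≤ finrank F p) : ∃ v : ι → V, LinearIndependent F v ∧ ∀ i, v i ∈ p := by
  obtain ⟨v, hv⟩ := exists_linearIndependent_of_le_finrank h
  exact ⟨p.subtype ∘ v ∘ Fintype.equivFin ι,
    (hv.comp _ (Fintype.equivFin ι).injective).map' p.subtype p.ker_subtype, fun i => (v _).2⟩

theorem LinearIndependent.sum_elim_of_disjoint {ι ι' : Type*} {v : ι → V} {v' : ι' → V}
    (hv : LinearIndependent F v) (hv' : LinearIndependent F v') {p q : Submodule F V}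
    (hvp : ∀ i, v i ∈ p) (hvq : ∀ i, v' i ∈ q) (hpq : Disjoint p q) :
    LinearIndependent F (Sum.elim v v') :=
  hv.sum_type hv' <|
    hpq.mono (span_le.2 (Set.range_subset_iff.2 hvp)) (span_le.2 (Set.range_subset_iff.2 hvq))

theorem sum_elim_mem_sup {ι ι' : Type*} {v : ι → V} {v' : ι' → V} {p q : Submodule F V}
    (hvp : ∀ i, v i ∈ p) (hvq : ∀ i, v' i ∈ q) : ∀ x, Sum.elim v v' x ∈ p ⊔ q
  | .inl i => mem_sup_left (hvp i)
  | .inr i => mem_sup_right (hvq i)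

theorem Submodule.finrank_inf_add_finrank_of_isCompl [FiniteDimensional F V]
    {K N C : Submodule F V} (hKN : K ≤ N) (hKC : IsCompl K C) :
    finrank F ↥(N ⊓ C) + finrank F K = finrank F N := by
  have hsup : K ⊔ N ⊓ C = N := by
    rw [inf_comm, ← sup_inf_assoc_of_le C hKN, hKC.sup_eq_top, top_inf_eq]
  have hinf : K ⊓ (N ⊓ C) = ⊥ := (hKC.disjoint.mono_right inf_le_right).eq_bot
  have := finrank_sup_add_finrank_inf_eq K (N ⊓ C)
  rw [hsup, hinf, finrank_bot] at this
  omega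

def HasIndependentSelection (N₁ N₂ : Submodule F V) (ι₁ ι₂ : Type*) : Prop :=
  ∃ (f : ι₁ → V) (g : ι₂ → V),
    (∀ i, f i ∈ N₁) ∧ (∀ j, g j ∈ N₂) ∧ LinearIndependent F (Sum.elim f g)

namespace HasIndependentSelection

variable {N₁ N₂ : Submodule F V} {ι₁ ι₂ : Type*}

theorem mono (h : HasIndependentSelection N₁ N₂ ι₁ ι₂) {N₁' N₂' : Submodule F V}
    (h₁ : N₁ ≤ N₁') (h₂ : N₂ ≤ N₂') : HasIndependentSelection N₁' N₂' ι₁ ι₂ :=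
  let ⟨f, g, hf, hg, hfg⟩ := h
  ⟨f, g, fun i => h₁ (hf i), fun j => h₂ (hg j), hfg⟩

theorem of_equiv {κ₁ κ₂ : Type*} (h : HasIndependentSelection N₁ N₂ ι₁ ι₂) (e₁ : κ₁ ≃ ι₁)
    (e₂ : κ₂ ≃ ι₂) : HasIndependentSelection N₁ N₂ κ₁ κ₂ := by
  obtain ⟨f, g, hf, hg, hfg⟩ := h
  refine ⟨f ∘ e₁, g ∘ e₂, fun i => hf _, fun j => hg _, ?_⟩
  rw [← Sum.elim_comp_map]
  exact (linearIndependent_equiv (e₁.sumCongr e₂)).2 hfg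

theorem card_le [FiniteDimensional F V] [Fintype ι₁] [Fintype ι₂]
    (h : HasIndependentSelection N₁ N₂ ι₁ ι₂) :
    Fintype.card ι₁ ≤ finrank F N₁ ∧ Fintype.card ι₂ ≤ finrank F N₂ ∧
      Fintype.card ι₁ + Fintype.card ι₂ ≤ finrank F ↥(N₁ ⊔ N₂) := by
  obtain ⟨f, g, hf, hg, hfg⟩ := h
  refine ⟨(hfg.comp _ Sum.inl_injective).card_le_finrank_of_forall_mem hf,
    (hfg.comp _ Sum.inr_injective).card_le_finrank_of_forall_mem hg, ?_⟩
  rw [← Fintype.card_sum]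
  exact hfg.card_le_finrank_of_forall_mem (sum_elim_mem_sup hf hg)

theorem of_disjoint [Fintype ι₁] [Fintype ι₂] (hN : Disjoint N₁ N₂)
    (h₁ : Fintype.card ι₁ ≤ finrank F N₁) (h₂ : Fintype.card ι₂ ≤ finrank F N₂) :
    HasIndependentSelection N₁ N₂ ι₁ ι₂ := by
  obtain ⟨f, hf, hfN⟩ := exists_linearIndependent_forall_mem h₁
  obtain ⟨g, hg, hgN⟩ := exists_linearIndependent_forall_mem h₂
  exact ⟨f, g, hfN, hgN, hf.sum_elim_of_disjoint hg hfN hgN hN⟩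

theorem of_card_add_le [Fintype ι₁] [Fintype ι₂] {K : Submodule F V}
    (h : Fintype.card ι₁ + Fintype.card ι₂ ≤ finrank F K) : HasIndependentSelection K K ι₁ ι₂ := by
  obtain ⟨v, hv, hvK⟩ :=
    exists_linearIndependent_forall_mem (ι := ι₁ ⊕ ι₂) (by rwa [Fintype.card_sum])
  exact ⟨v ∘ Sum.inl, v ∘ Sum.inr, fun _ => hvK _, fun _ => hvK _, by
    rwa [Sum.elim_comp_inl_inr]⟩

theorem sum {κ₁ κ₂ : Type*} {P₁ P₂ Q₁ Q₂ : Submodule F V}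
    (h : HasIndependentSelection P₁ P₂ ι₁ ι₂) (h' : HasIndependentSelection Q₁ Q₂ κ₁ κ₂)
    (hPQ : Disjoint (P₁ ⊔ P₂) (Q₁ ⊔ Q₂)) :
    HasIndependentSelection (P₁ ⊔ Q₁) (P₂ ⊔ Q₂) (ι₁ ⊕ κ₁) (ι₂ ⊕ κ₂) := by
  obtain ⟨f, g, hf, hg, hfg⟩ := h
  obtain ⟨f', g', hf', hg', hfg'⟩ := h'
  refine ⟨Sum.elim f f', Sum.elim g g', sum_elim_mem_sup hf hf', sum_elim_mem_sup hg hg', ?_⟩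
  rw [← linearIndependent_equiv (Equiv.sumSumSumComm ι₁ κ₁ ι₂ κ₂).symm]
  convert hfg.sum_elim_of_disjoint hfg' (sum_elim_mem_sup hf hg) (sum_elim_mem_sup hf' hg') hPQ
    using 1
  ext ((i | i) | (i | i)) <;> rfl

theorem of_card_le [FiniteDimensional F V] [Fintype ι₁] [Fintype ι₂]
    (h₁ : Fintype.card ι₁ ≤ finrank F N₁) (h₂ : Fintype.card ι₂ ≤ finrank F N₂)
    (h : Fintype.card ι₁ + Fintype.card ι₂ ≤ finrank F ↥(N₁ ⊔ N₂)) :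
    HasIndependentSelection N₁ N₂ ι₁ ι₂ := by
  obtain ⟨C, hC⟩ := (N₁ ⊓ N₂).exists_isCompl
  have hd₁ := finrank_inf_add_finrank_of_isCompl inf_le_left hC
  have hd₂ := finrank_inf_add_finrank_of_isCompl inf_le_right hC
  have hd := finrank_sup_add_finrank_inf_eq N₁ N₂
  obtain ⟨x₁, y₁, x₂, y₂, hxy₁, hxy₂, hx₁, hx₂, hy⟩ : ∃ x₁ y₁ x₂ y₂ : ℕ,
      x₁ + y₁ = Fintype.card ι₁ ∧ x₂ + y₂ = Fintype.card ι₂ ∧ x₁ ≤ finrank F ↥(N₁ ⊓ C) ∧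
        x₂ ≤ finrank F ↥(N₂ ⊓ C) ∧ y₁ + y₂ ≤ finrank F ↥(N₁ ⊓ N₂) :=
    ⟨min (Fintype.card ι₁) (finrank F ↥(N₁ ⊓ C)),
      Fintype.card ι₁ - min (Fintype.card ι₁) (finrank F ↥(N₁ ⊓ C)),
      min (Fintype.card ι₂) (finrank F ↥(N₂ ⊓ C)),
      Fintype.card ι₂ - min (Fintype.card ι₂) (finrank F ↥(N₂ ⊓ C)), by omega⟩
  have hA₁₂ : Disjoint (N₁ ⊓ C) (N₂ ⊓ C) := disjoint_iff_inf_le.2 <|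
    (le_inf (inf_le_inf inf_le_left inf_le_left) (inf_le_left.trans inf_le_right)).trans
      hC.disjoint.le_bot
  have hA : HasIndependentSelection (N₁ ⊓ C) (N₂ ⊓ C) (Fin x₁) (Fin x₂) :=
    of_disjoint hA₁₂ (by simpa) (by simpa)
  have hK : HasIndependentSelection (N₁ ⊓ N₂) (N₁ ⊓ N₂) (Fin y₁) (Fin y₂) :=
    of_card_add_le (by simpa)
  have hAK : Disjoint (N₁ ⊓ C ⊔ N₂ ⊓ C) (N₁ ⊓ N₂ ⊔ N₁ ⊓ N₂) :=
    hC.disjoint.symm.mono (sup_le inf_le_right inf_le_right) (sup_le le_rfl le_rfl)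
  exact ((hA.sum hK hAK).mono (sup_le inf_le_left inf_le_left)
    (sup_le inf_le_left inf_le_right)).of_equiv
      ((Fintype.equivFinOfCardEq hxy₁.symm).trans finSumFinEquiv.symm)
      ((Fintype.equivFinOfCardEq hxy₂.symm).trans finSumFinEquiv.symm)

end HasIndependentSelection

theorem hasIndependentSelection_iff [FiniteDimensional F V] (N₁ N₂ : Submodule F V)
    (ι₁ ι₂ : Type*) [Fintype ι₁] [Fintype ι₂] :
    HasIndependentSelection N₁ N₂ ι₁ ι₂ ↔
      Fintype.card ι₁ ≤ finrank F N₁ ∧ Fintype.card ι₂ ≤ finrank F N₂ ∧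
        Fintype.card ι₁ + Fintype.card ι₂ ≤ finrank F ↥(N₁ ⊔ N₂) :=
  ⟨HasIndependentSelection.card_le, fun ⟨h₁, h₂, h⟩ => .of_card_le h₁ h₂ h⟩

end

/-- One can select `R₁` vectors from `N₁` and `R₂` vectors
from `N₂` so that all `R₁ + R₂` vectors are linearly independent iff
`R₁ ≤ dim N₁`, `R₂ ≤ dim N₂` and `R₁ + R₂ ≤ dim (N₁ + N₂)`. -/
theorem select_independent_vectors_iff {F V : Type*} [Field F]
    [AddCommGroup V] [Module F V] [FiniteDimensional F V]
    (N₁ N₂ : Submodule F V) (R₁ R₂ : ℕ) :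
    (∃ (f : Fin R₁ → V) (g : Fin R₂ → V),
        (∀ i, f i ∈ N₁) ∧ (∀ j, g j ∈ N₂) ∧
        LinearIndependent F (Sum.elim f g)) ↔
      (R₁ ≤ Module.finrank F ↥N₁ ∧ R₂ ≤ Module.finrank F ↥N₂ ∧
        R₁ + R₂ ≤ Module.finrank F ↥(N₁ ⊔ N₂)) := by
  simpa only [HasIndependentSelection, Fintype.card_fin] using
    hasIndependentSelection_iff N₁ N₂ (Fin R₁) (Fin R₂)
end

section
/- Let G be an ℓ × k matrix over a sufficiently large finite field 𝔽_q and let r, k₁, k₂ be such that k₁ + k₂ = k. There exists an r × k matrix U over 𝔽_q such that for every choice of k₁ linearly independent rows of G and every choice of k₂ rows of U, the resulting k × k matrix (stacking the chosen rows) is invertible, provided q is large enough relative to ℓ, r and k. -/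
/-!
For each choice of rows `(s, u)`, the determinant of the stacked matrix is a polynomial of total
degree at most `k` in the `r * k` entries of `U`. It is nonzero: extending the independent rows
`G ∘ s` to a basis of `F^k` and putting the new vectors in rows `u` of `U` gives a point where it
does not vanish. The product over the at most `ℓ^k₁ * r^k₂` choices is then a nonzero polynomial of
degree at most `ℓ^k₁ * r^k₂ * k`, so once `q` exceeds this bound the Schwartz–Zippel lemma provides
a matrix `U` at which none of the determinants vanishes.
-/

open Finset MvPolynomial Matrix

namespace MvPolynomial

section CommRing

variable {R σ : Type*} [CommRing R]

theorem totalDegree_rename_of_injective {τ : Type*} {f : σ → τ} (hf : Function.Injective f)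
    (p : MvPolynomial σ R) : (rename f p).totalDegree = p.totalDegree := by
  rw [← weightedTotalDegree_one, weightedTotalDegree_rename_of_injective hf, Pi.one_comp,
    weightedTotalDegree_one]

theorem totalDegree_det_le {n : Type*} [Fintype n] [DecidableEq n]
    {M : Matrix n n (MvPolynomial σ R)} {d : ℕ} (h : ∀ i j, (M i j).totalDegree ≤ d) :
    M.det.totalDegree ≤ Fintype.card n * d := by
  rw [det_apply']
  refine totalDegree_finsetSum_le fun τ _ => ?_
  calc (((Equiv.Perm.sign τ : ℤ) : MvPolynomial σ R) * ∏ i, M (τ i) i).totalDegree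
      ≤ ((Equiv.Perm.sign τ : ℤ) : MvPolynomial σ R).totalDegree + (∏ i, M (τ i) i).totalDegree :=
        totalDegree_mul _ _
    _ ≤ 0 + ∑ i, (M (τ i) i).totalDegree := by
        gcongr
        · rw [← map_intCast (C : R →+* MvPolynomial σ R), totalDegree_C]
        · exact totalDegree_finsetProd _ _
    _ ≤ Fintype.card n * d := by
        rw [zero_add, ← smul_eq_mul, ← card_univ, ← sum_const]
        exact sum_le_sum fun i _ => h _ _

end CommRing

variable {R σ : Type*} [CommRing R] [IsDomain R] [Fintype R]

theorem exists_eval_ne_zero_of_totalDegree_lt_card {p : MvPolynomial σ R} (hp : p ≠ 0)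
    (hdeg : p.totalDegree < Fintype.card R) : ∃ x, eval x p ≠ 0 := by
  classical
  obtain ⟨n, f, hf, p, rfl⟩ := exists_fin_rename p
  rw [totalDegree_rename_of_injective hf] at hdeg
  obtain ⟨x, hx⟩ : ∃ x, eval x p ≠ 0 := by
    by_contra! hzero
    have hp₀ : p ≠ 0 := by rintro rfl; simp at hp
    have hR : (0 : ℚ≥0) < Fintype.card R := by exact_mod_cast Fintype.card_pos
    -- Schwartz–Zippel with sample set `univ`: the proportion of zeros, here `1`, is `≤ deg p / q`.
    have hSZ : (1 : ℚ≥0) ≤ p.totalDegree / Fintype.card R := by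
      simpa [hzero] using schwartz_zippel_totalDegree hp₀ (univ : Finset R)
    rw [le_div_iff₀ hR, one_mul] at hSZ
    exact hdeg.not_ge (by exact_mod_cast hSZ)
  obtain ⟨y, rfl⟩ := (Function.factorsThrough_iff _).mp (hf.factorsThrough x)
  exact ⟨y, by rwa [eval_rename]⟩

theorem exists_forall_eval_ne_zero {ι : Type*} (s : Finset ι) (p : ι → MvPolynomial σ R)
    (hp : ∀ i ∈ s, p i ≠ 0) (hdeg : ∑ i ∈ s, (p i).totalDegree < Fintype.card R) :
    ∃ x, ∀ i ∈ s, eval x (p i) ≠ 0 := by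
  obtain ⟨x, hx⟩ := exists_eval_ne_zero_of_totalDegree_lt_card (prod_ne_zero_iff.mpr hp)
    ((totalDegree_finsetProd s p).trans_lt hdeg)
  exact ⟨x, prod_ne_zero_iff.mp (by rwa [map_prod] at hx)⟩

end MvPolynomial

theorem LinearIndependent.exists_linearIndependent_sumElim {K V ι ι' : Type*} [DivisionRing K]
    [AddCommGroup V] [Module K V] [FiniteDimensional K V] [Fintype ι] [Fintype ι']
    {v : ι → V} (hv : LinearIndependent K v)
    (hcard : Fintype.card ι + Fintype.card ι' = Module.finrank K V) :
    ∃ w : ι' → V, LinearIndependent K (Sum.elim v w) := by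
  obtain ⟨W, hW⟩ := Submodule.exists_isCompl (Submodule.span K (Set.range v))
  have hW_finrank : Module.finrank K W = Fintype.card ι' := by
    have := Submodule.finrank_add_eq_of_isCompl hW
    rw [finrank_span_eq_card hv] at this
    omega
  let b : Module.Basis ι' K W :=
    (Module.finBasisOfFinrankEq K W hW_finrank).reindex (Fintype.equivFin ι').symm
  refine ⟨fun i => b i, hv.sum_type (b.linearIndependent.map' W.subtype W.ker_subtype) ?_⟩
  refine hW.disjoint.mono_right (Submodule.span_le.mpr ?_)
  rintro _ ⟨i, rfl⟩
  exact (b i).2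

section GenericStackDet

variable {R : Type*} [CommRing R] {m₁ m₂ n : Type*} [Fintype n] [DecidableEq n]

noncomputable def genericStackDet (e : m₁ ⊕ m₂ ≃ n) (A : Matrix m₁ n R) :
    MvPolynomial (m₂ × n) R :=
  (reindex e (Equiv.refl n) (fromRows (A.map C) (mvPolynomialX m₂ n R))).det

theorem eval_genericStackDet (e : m₁ ⊕ m₂ ≃ n) (A : Matrix m₁ n R) (x : m₂ × n → R) :
    eval x (genericStackDet e A) =
      (reindex e (Equiv.refl n) (fromRows A (of fun i j => x (i, j)))).det := by
  rw [genericStackDet, RingHom.map_det]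
  congr 1
  ext i j
  rcases h : e.symm i with a | b <;> simp [h]

theorem totalDegree_genericStackDet_le (e : m₁ ⊕ m₂ ≃ n) (A : Matrix m₁ n R) :
    (genericStackDet e A).totalDegree ≤ Fintype.card n := by
  refine (totalDegree_det_le fun i j => ?_).trans_eq (mul_one _)
  rcases h : e.symm i with a | b
  · simp [h]
  · simpa [h, X] using totalDegree_monomial_le (Finsupp.single (b, j) 1) (1 : R)

theorem genericStackDet_ne_zero {K : Type*} [Field K] [Fintype m₁] [Fintype m₂]
    (e : m₁ ⊕ m₂ ≃ n) {A : Matrix m₁ n K} (hA : LinearIndependent K A.row) :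
    genericStackDet e A ≠ 0 := by
  have hcard : Fintype.card m₁ + Fintype.card m₂ = Module.finrank K (n → K) := by
    rw [Module.finrank_fintype_fun_eq_card, ← Fintype.card_sum, Fintype.card_congr e]
  obtain ⟨B, hB⟩ := hA.exists_linearIndependent_sumElim hcard
  have hunit : IsUnit (reindex e (Equiv.refl n) (fromRows A B)) := by
    rw [← linearIndependent_rows_iff_isUnit]
    exact hB.comp e.symm e.symm.injective
  intro h
  have heval := eval_genericStackDet e A fun p => B p.1 p.2
  rw [h, map_zero] at heval
  exact ((isUnit_iff_isUnit_det _).mp hunit).ne_zero heval.symm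

end GenericStackDet

/-- For `k₁ + k₂ = k` there is a bound `q₀` (depending on
`ℓ, r, k`) such that over any finite field with at least `q₀` elements
and any `ℓ × k` matrix `G`, there exists an `r × k` matrix `U` such that
stacking any `k₁` linearly independent rows of `G` with any `k₂` (distinct)
rows of `U` gives an invertible `k × k` matrix. -/
theorem exists_key_matrix (ℓ r k k₁ k₂ : ℕ) (hk : k₁ + k₂ = k) :
    ∃ q₀ : ℕ, ∀ (F : Type) [Field F] [Fintype F],
      q₀ ≤ Fintype.card F →
      ∀ G : Matrix (Fin ℓ) (Fin k) F,
        ∃ U : Matrix (Fin r) (Fin k) F,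
          ∀ (s : Fin k₁ → Fin ℓ) (u : Fin k₂ → Fin r),
            Function.Injective s → Function.Injective u →
            LinearIndependent F (fun i => G (s i)) →
            IsUnit (Matrix.det (Matrix.of fun i j : Fin k =>
              Sum.elim (fun a => G (s a)) (fun b => U (u b))
                ((finSumFinEquiv.trans (finCongr hk)).symm i) j)) := by
  classical
  refine ⟨ℓ ^ k₁ * r ^ k₂ * k + 1, fun F _ _ hq G => ?_⟩
  let e := finSumFinEquiv.trans (finCongr hk)
  let D : (Fin k₁ → Fin ℓ) × (Fin k₂ → Fin r) → MvPolynomial (Fin r × Fin k) F :=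
    fun p => rename (Prod.map p.2 id) (genericStackDet e (G.submatrix p.1 id))
  let T := univ.filter fun p : (Fin k₁ → Fin ℓ) × (Fin k₂ → Fin r) =>
    Function.Injective p.2 ∧ LinearIndependent F (G.submatrix p.1 id).row
  have hD_ne_zero : ∀ p ∈ T, D p ≠ 0 := by
    rintro ⟨s, u⟩ hp
    obtain ⟨hu, hs⟩ := (mem_filter_univ _).mp hp
    exact (map_ne_zero_iff _ (rename_injective _ (hu.prodMap Function.injective_id))).mpr
      (genericStackDet_ne_zero e hs)
  have hD_degree : ∑ p ∈ T, (D p).totalDegree < Fintype.card F :=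
    calc ∑ p ∈ T, (D p).totalDegree ≤ ∑ _p ∈ T, k :=
          sum_le_sum fun p _ => (totalDegree_rename_le _ _).trans
            ((totalDegree_genericStackDet_le e _).trans_eq (Fintype.card_fin k))
      _ ≤ ℓ ^ k₁ * r ^ k₂ * k := by
          rw [sum_const, smul_eq_mul]
          gcongr
          simpa using card_le_univ T
      _ < Fintype.card F := hq
  obtain ⟨x, hx⟩ := exists_forall_eval_ne_zero T D hD_ne_zero hD_degree
  refine ⟨of fun i j => x (i, j), fun s u _ hu hs => ?_⟩
  have hU := hx (s, u) ((mem_filter_univ _).mpr ⟨hu, hs⟩)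
  rw [eval_rename, eval_genericStackDet] at hU
  exact isUnit_iff_ne_zero.mpr hU
end

section
/- Consider random variables W (message), X₁, X₂, X₃, X₄ over a finite alphabet such that: X₄ is a deterministic function of (X₁, X₂); W is decodable from (X₃, X₄), i.e., H(W | X₃, X₄) = 0; the pair (X₂, X₃) is independent of (W, X₁); and perfect secrecy holds against wiretapping any single edge, in particular I(W; X₁) = 0. Then H(W) = 0. -/
open Finset

/-- Shannon entropy of a random variable `X` on a finite probability space
with mass function `p`. -/
noncomputable def ent {Ω α : Type*} [Fintype Ω] [Fintype α] [DecidableEq α]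
    (p : Ω → ℝ) (X : Ω → α) : ℝ :=
  ∑ x : α, Real.negMulLog (∑ ω ∈ univ.filter (fun ω => X ω = x), p ω)

/-- Conditional entropy `H(W | X) = H(W, X) - H(X)`. -/
noncomputable def condEnt {Ω α β : Type*} [Fintype Ω] [Fintype α] [Fintype β]
    [DecidableEq α] [DecidableEq β] (p : Ω → ℝ) (W : Ω → α) (X : Ω → β) : ℝ :=
  ent p (fun ω => (W ω, X ω)) - ent p X

/-- Mutual information `I(X; Y) = H(X) + H(Y) - H(X, Y)`. -/
noncomputable def mutInfo {Ω α β : Type*} [Fintype Ω] [Fintype α] [Fintype β]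
    [DecidableEq α] [DecidableEq β] (p : Ω → ℝ) (X : Ω → α) (Y : Ω → β) : ℝ :=
  ent p X + ent p Y - ent p (fun ω => (X ω, Y ω))


lemma negMulLog_sum_diff {ι : Type*} (s : Finset ι) (q : ι → ℝ) :
    (∑ i ∈ s, Real.negMulLog (q i)) - Real.negMulLog (∑ i ∈ s, q i)
      = ∑ i ∈ s, q i * (Real.log (∑ j ∈ s, q j) - Real.log (q i)) := by
  have h : Real.negMulLog (∑ i ∈ s, q i)
      = -∑ i ∈ s, q i * Real.log (∑ j ∈ s, q j) := by
    rw [Real.negMulLog, ← Finset.sum_mul]; ring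
  rw [h, sub_neg_eq_add, ← Finset.sum_add_distrib]
  refine Finset.sum_congr rfl fun i _ => ?_
  rw [Real.negMulLog]; ring

lemma term_nonneg {ι : Type*} {s : Finset ι} {q : ι → ℝ} (hq : ∀ i ∈ s, 0 ≤ q i)
    {i : ι} (hi : i ∈ s) : 0 ≤ q i * (Real.log (∑ j ∈ s, q j) - Real.log (q i)) := by
  rcases eq_or_lt_of_le (hq i hi) with h | h
  · simp [← h]
  · refine mul_nonneg h.le (sub_nonneg.2 (Real.log_le_log h ?_))
    exact Finset.single_le_sum hq hi

lemma eq_sum_of_negMulLog_eq {ι : Type*} {s : Finset ι} {q : ι → ℝ} (hq : ∀ i ∈ s, 0 ≤ q i)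
    (h : (∑ i ∈ s, Real.negMulLog (q i)) = Real.negMulLog (∑ i ∈ s, q i))
    {i : ι} (hi : i ∈ s) (hpos : 0 < q i) : q i = ∑ j ∈ s, q j := by
  have h0 : ∑ i ∈ s, q i * (Real.log (∑ j ∈ s, q j) - Real.log (q i)) = 0 := by
    rw [← negMulLog_sum_diff, h, sub_self]
  have hall := (Finset.sum_eq_zero_iff_of_nonneg (fun i hi => term_nonneg hq hi)).1 h0 i hi
  have hlog : Real.log (∑ j ∈ s, q j) = Real.log (q i) := by
    rcases mul_eq_zero.1 hall with h' | h'
    · exact absurd h' hpos.ne'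
    · linarith [sub_eq_zero.1 h']
  have hS : 0 < ∑ j ∈ s, q j := lt_of_lt_of_le hpos (Finset.single_le_sum hq hi)
  exact (Real.log_injOn_pos (Set.mem_Ioi.2 hS) (Set.mem_Ioi.2 hpos) hlog).symm

lemma marg {Ω β γ : Type*} [Fintype Ω] [Fintype β] [DecidableEq β] [DecidableEq γ]
    (p : Ω → ℝ) (Y : Ω → β) (Z : Ω → γ) (z : γ) :
    ∑ ω ∈ univ.filter (fun ω => Z ω = z), p ω
      = ∑ y : β, ∑ ω ∈ univ.filter (fun ω => Y ω = y ∧ Z ω = z), p ω := by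
  classical
  rw [← Finset.sum_fiberwise (univ.filter (fun ω => Z ω = z)) Y p]
  refine Finset.sum_congr rfl fun y _ => Finset.sum_congr ?_ fun _ _ => rfl
  rw [Finset.filter_filter]
  exact Finset.filter_congr (by intro ω _; tauto)

lemma condEnt_eq_zero_imp {Ω α β : Type*} [Fintype Ω] [Fintype α] [Fintype β]
    [DecidableEq α] [DecidableEq β]
    (p : Ω → ℝ) (hp0 : ∀ ω, 0 ≤ p ω) (W : Ω → α) (Y : Ω → β)
    (h : condEnt p W Y = 0) (w w' : α) (y : β)
    (h1 : 0 < ∑ ω ∈ univ.filter (fun ω => W ω = w ∧ Y ω = y), p ω)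
    (h2 : 0 < ∑ ω ∈ univ.filter (fun ω => W ω = w' ∧ Y ω = y), p ω) : w = w' := by
  classical
  set m : α → β → ℝ := fun w y => ∑ ω ∈ univ.filter (fun ω => W ω = w ∧ Y ω = y), p ω with hm
  have hmn : ∀ w y, 0 ≤ m w y := fun w y => Finset.sum_nonneg fun ω _ => hp0 ω
  have hjoint : ent p (fun ω => (W ω, Y ω)) = ∑ y : β, ∑ w : α, Real.negMulLog (m w y) := by
    rw [ent, Fintype.sum_prod_type, Finset.sum_comm]
    refine Finset.sum_congr rfl fun y _ => Finset.sum_congr rfl fun w _ => ?_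
    congr 1
    refine Finset.sum_congr (Finset.filter_congr ?_) fun _ _ => rfl
    intro ω _; simp [Prod.mk.injEq]
  have hY : ent p Y = ∑ y : β, Real.negMulLog (∑ w : α, m w y) := by
    rw [ent]
    refine Finset.sum_congr rfl fun y _ => ?_
    rw [marg p W Y y]
  have hD : ∀ y, 0 ≤ (∑ w : α, Real.negMulLog (m w y)) - Real.negMulLog (∑ w : α, m w y) := by
    intro y
    rw [negMulLog_sum_diff]
    exact Finset.sum_nonneg fun i hi => term_nonneg (fun j _ => hmn j y) hi
  have hsum0 : ∑ y : β, ((∑ w : α, Real.negMulLog (m w y)) - Real.negMulLog (∑ w : α, m w y)) = 0 := by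
    rw [Finset.sum_sub_distrib, ← hjoint, ← hY, ← condEnt, h]
  have heach := (Finset.sum_eq_zero_iff_of_nonneg (fun y _ => hD y)).1 hsum0 y (Finset.mem_univ y)
  have heq : (∑ w : α, Real.negMulLog (m w y)) = Real.negMulLog (∑ w : α, m w y) :=
    sub_eq_zero.1 heach
  have e1 : m w y = ∑ j : α, m j y :=
    eq_sum_of_negMulLog_eq (fun j _ => hmn j y) heq (Finset.mem_univ w) h1
  have e2 : m w' y = ∑ j : α, m j y :=
    eq_sum_of_negMulLog_eq (fun j _ => hmn j y) heq (Finset.mem_univ w') h2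
  by_contra hne
  have := Finset.add_le_sum (f := fun j => m j y) (s := univ)
    (fun j _ => hmn j y) (Finset.mem_univ w) (Finset.mem_univ w') hne
  have h' : m w y + m w' y ≤ ∑ k : α, m k y := this
  have hS : 0 < ∑ j : α, m j y := e1 ▸ h1
  rw [e1, e2] at h'
  linarith

lemma klTerm_nonneg {m q : ℝ} (hm : 0 ≤ m) (hq : 0 ≤ q) (habs : 0 < m → 0 < q) :
    0 ≤ m * Real.log m - m * Real.log q - m + q := by
  rcases eq_or_lt_of_le hm with h | h
  · simp [← h, hq]
  · have hq' := habs h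
    have hlog : Real.log (q / m) ≤ q / m - 1 := Real.log_le_sub_one_of_pos (by positivity)
    rw [Real.log_div hq'.ne' h.ne'] at hlog
    have := mul_le_mul_of_nonneg_left hlog h.le
    have hqm : m * (q / m - 1) = q - m := by field_simp
    nlinarith

lemma klTerm_eq_zero {m q : ℝ} (hm : 0 ≤ m) (hq : 0 ≤ q) (habs : 0 < m → 0 < q)
    (hz : m * Real.log m - m * Real.log q - m + q = 0) : m = q := by
  rcases eq_or_lt_of_le hm with h | h
  · simp [← h] at hz ⊢; linarith
  · have hq' := habs h
    by_contra hne
    have hne' : q / m ≠ 1 := by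
      intro hc
      exact hne (by field_simp at hc; linarith)
    have hlog : Real.log (q / m) < q / m - 1 :=
      Real.log_lt_sub_one_of_pos (by positivity) hne'
    rw [Real.log_div hq'.ne' h.ne'] at hlog
    have := mul_lt_mul_of_pos_left hlog h
    have hqm : m * (q / m - 1) = q - m := by field_simp
    nlinarith

lemma mutInfo_eq_zero_imp {Ω α β : Type*} [Fintype Ω] [Fintype α] [Fintype β]
    [DecidableEq α] [DecidableEq β]
    (p : Ω → ℝ) (hp0 : ∀ ω, 0 ≤ p ω) (hp1 : ∑ ω : Ω, p ω = 1)
    (X : Ω → α) (Y : Ω → β) (h : mutInfo p X Y = 0) (x : α) (y : β) :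
    (∑ ω ∈ univ.filter (fun ω => X ω = x ∧ Y ω = y), p ω)
      = (∑ ω ∈ univ.filter (fun ω => X ω = x), p ω)
        * (∑ ω ∈ univ.filter (fun ω => Y ω = y), p ω) := by
  classical
  set m : α → β → ℝ := fun x y => ∑ ω ∈ univ.filter (fun ω => X ω = x ∧ Y ω = y), p ω with hm
  set mX : α → ℝ := fun x => ∑ ω ∈ univ.filter (fun ω => X ω = x), p ω with hmX
  set mY : β → ℝ := fun y => ∑ ω ∈ univ.filter (fun ω => Y ω = y), p ω with hmY
  have hmn : ∀ x y, 0 ≤ m x y := fun x y => Finset.sum_nonneg fun ω _ => hp0 ω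
  have hmXn : ∀ x, 0 ≤ mX x := fun x => Finset.sum_nonneg fun ω _ => hp0 ω
  have hmYn : ∀ y, 0 ≤ mY y := fun y => Finset.sum_nonneg fun ω _ => hp0 ω
  have hX : ∀ x, mX x = ∑ y : β, m x y := by
    intro x
    show (∑ ω ∈ univ.filter (fun ω => X ω = x), p ω) = _
    rw [marg p Y X x]
    refine Finset.sum_congr rfl fun y _ => Finset.sum_congr ?_ fun _ _ => rfl
    exact Finset.filter_congr (by intro ω _; tauto)
  have hY : ∀ y, mY y = ∑ x : α, m x y := by
    intro y
    show (∑ ω ∈ univ.filter (fun ω => Y ω = y), p ω) = _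
    exact marg p X Y y
  have hXle : ∀ x y, m x y ≤ mX x := by
    intro x y; rw [hX x]
    exact Finset.single_le_sum (fun j _ => hmn x j) (Finset.mem_univ y)
  have hYle : ∀ x y, m x y ≤ mY y := by
    intro x y; rw [hY y]
    exact Finset.single_le_sum (fun j _ => hmn j y) (Finset.mem_univ x)
  have htotX : ∑ x : α, mX x = 1 := by
    show ∑ x : α, (∑ ω ∈ univ.filter (fun ω => X ω = x), p ω) = 1
    rw [Finset.sum_fiberwise univ X p]; exact hp1
  have htotY : ∑ y : β, mY y = 1 := by
    show ∑ y : β, (∑ ω ∈ univ.filter (fun ω => Y ω = y), p ω) = 1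
    rw [Finset.sum_fiberwise univ Y p]; exact hp1
  -- express the three entropies as double sums
  have hjoint : ent p (fun ω => (X ω, Y ω))
      = ∑ x : α, ∑ y : β, Real.negMulLog (m x y) := by
    rw [ent, Fintype.sum_prod_type]
    refine Finset.sum_congr rfl fun x _ => Finset.sum_congr rfl fun y _ => ?_
    congr 1
    refine Finset.sum_congr (Finset.filter_congr ?_) fun _ _ => rfl
    intro ω _; simp [Prod.mk.injEq]
  have hentX : ent p X = ∑ x : α, ∑ y : β, (- (m x y * Real.log (mX x))) := by
    rw [ent]
    refine Finset.sum_congr rfl fun x _ => ?_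
    have : Real.negMulLog (mX x) = -((∑ y : β, m x y) * Real.log (mX x)) := by
      rw [Real.negMulLog, ← hX x]; ring
    rw [show (∑ ω ∈ univ.filter (fun ω => X ω = x), p ω) = mX x from rfl, this,
      Finset.sum_mul, ← Finset.sum_neg_distrib]
  have hentY : ent p Y = ∑ x : α, ∑ y : β, (- (m x y * Real.log (mY y))) := by
    rw [ent, Finset.sum_comm]
    refine Finset.sum_congr rfl fun y _ => ?_
    have : Real.negMulLog (mY y) = -((∑ x : α, m x y) * Real.log (mY y)) := by
      rw [Real.negMulLog, ← hY y]; ring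
    rw [show (∑ ω ∈ univ.filter (fun ω => Y ω = y), p ω) = mY y from rfl, this,
      Finset.sum_mul, ← Finset.sum_neg_distrib]
  -- the KL identity
  have hkl : mutInfo p X Y = ∑ x : α, ∑ y : β,
      (m x y * Real.log (m x y) - m x y * Real.log (mX x * mY y) - m x y + mX x * mY y) := by
    have hsm : ∑ x : α, ∑ y : β, m x y = 1 := by
      rw [← htotX]; exact Finset.sum_congr rfl fun x _ => (hX x).symm
    have hsq : ∑ x : α, ∑ y : β, mX x * mY y = 1 := by
      rw [show (1:ℝ) = (∑ x : α, mX x) * (∑ y : β, mY y) by rw [htotX, htotY]; ring]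
      rw [Finset.sum_mul]
      exact Finset.sum_congr rfl fun x _ => by rw [Finset.mul_sum]
    have key : ∀ x y, m x y * Real.log (m x y) - m x y * Real.log (mX x * mY y)
        = m x y * Real.log (m x y) - m x y * Real.log (mX x) - m x y * Real.log (mY y) := by
      intro x y
      rcases eq_or_lt_of_le (hmn x y) with h0 | h0
      · simp [← h0]
      · have h1 : mX x ≠ 0 := (lt_of_lt_of_le h0 (hXle x y)).ne'
        have h2 : mY y ≠ 0 := (lt_of_lt_of_le h0 (hYle x y)).ne'
        rw [Real.log_mul h1 h2]; ring
    have step1 : mutInfo p X Y = ∑ x : α, ∑ y : β,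
        (m x y * Real.log (m x y) - m x y * Real.log (mX x) - m x y * Real.log (mY y)) := by
      rw [mutInfo, hentX, hentY, hjoint, ← Finset.sum_add_distrib, ← Finset.sum_sub_distrib]
      refine Finset.sum_congr rfl fun x _ => ?_
      rw [← Finset.sum_add_distrib, ← Finset.sum_sub_distrib]
      refine Finset.sum_congr rfl fun y _ => ?_
      rw [Real.negMulLog]; ring
    have expand : ∑ x : α, ∑ y : β,
        (m x y * Real.log (m x y) - m x y * Real.log (mX x * mY y) - m x y + mX x * mY y)
        = (∑ x : α, ∑ y : β,
            (m x y * Real.log (m x y) - m x y * Real.log (mX x) - m x y * Real.log (mY y)))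
          - (∑ x : α, ∑ y : β, m x y) + (∑ x : α, ∑ y : β, mX x * mY y) := by
      rw [← Finset.sum_sub_distrib, ← Finset.sum_add_distrib]
      refine Finset.sum_congr rfl fun x _ => ?_
      rw [← Finset.sum_sub_distrib, ← Finset.sum_add_distrib]
      refine Finset.sum_congr rfl fun y _ => ?_
      rw [key x y]
    rw [expand, hsm, hsq, step1]
    ring
  -- conclude independence
  have hqn : ∀ x y, 0 ≤ mX x * mY y := fun x y => mul_nonneg (hmXn x) (hmYn y)
  have habs : ∀ x y, 0 < m x y → 0 < mX x * mY y := fun x y hpos =>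
    mul_pos (lt_of_lt_of_le hpos (hXle x y)) (lt_of_lt_of_le hpos (hYle x y))
  have hzero : ∑ x : α, ∑ y : β,
      (m x y * Real.log (m x y) - m x y * Real.log (mX x * mY y) - m x y + mX x * mY y) = 0 := by
    rw [← hkl, h]
  have houter := (Finset.sum_eq_zero_iff_of_nonneg (fun x _ =>
    Finset.sum_nonneg fun y _ => klTerm_nonneg (hmn x y) (hqn x y) (habs x y))).1 hzero x
    (Finset.mem_univ x)
  have hinner := (Finset.sum_eq_zero_iff_of_nonneg (fun y _ =>
    klTerm_nonneg (hmn x y) (hqn x y) (habs x y))).1 houter y (Finset.mem_univ y)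
  exact klTerm_eq_zero (hmn x y) (hqn x y) (habs x y) hinner

/-- If `X₄` is a function of `(X₁, X₂)`, `W` is decodable
from `(X₃, X₄)`, `(X₂, X₃)` is independent of `(W, X₁)`, and `I(W; X₁) = 0`,
then `H(W) = 0`. -/
theorem rate_pair_not_achievable {Ω α₀ α₁ α₂ α₃ α₄ : Type*}
    [Fintype Ω] [Fintype α₀] [Fintype α₁] [Fintype α₂] [Fintype α₃]
    [Fintype α₄] [DecidableEq α₀] [DecidableEq α₁] [DecidableEq α₂]
    [DecidableEq α₃] [DecidableEq α₄]
    (p : Ω → ℝ) (hp0 : ∀ ω, 0 ≤ p ω) (hp1 : ∑ ω : Ω, p ω = 1)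
    (W : Ω → α₀) (X₁ : Ω → α₁) (X₂ : Ω → α₂) (X₃ : Ω → α₃) (X₄ : Ω → α₄)
    (hdet : ∃ f : α₁ × α₂ → α₄, ∀ ω, X₄ ω = f (X₁ ω, X₂ ω))
    (hdec : condEnt p W (fun ω => (X₃ ω, X₄ ω)) = 0)
    (hind : ∀ (a : α₂ × α₃) (b : α₀ × α₁),
      (∑ ω ∈ univ.filter (fun ω => (X₂ ω, X₃ ω) = a ∧ (W ω, X₁ ω) = b), p ω)
        = (∑ ω ∈ univ.filter (fun ω => (X₂ ω, X₃ ω) = a), p ω) *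
          (∑ ω ∈ univ.filter (fun ω => (W ω, X₁ ω) = b), p ω))
    (hsec : mutInfo p W X₁ = 0) :
    ent p W = 0 := by
  classical
  obtain ⟨f, hf⟩ := hdet
  -- a point of positive probability
  obtain ⟨ω₀, hω₀⟩ : ∃ ω, 0 < p ω := by
    by_contra hc
    push_neg at hc
    have : ∑ ω : Ω, p ω = 0 :=
      Finset.sum_eq_zero fun ω _ => le_antisymm (hc ω) (hp0 ω)
    rw [hp1] at this; norm_num at this
  -- independence of W and X₁
  have hWX := mutInfo_eq_zero_imp p hp0 hp1 W X₁ hsec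
  set x₀ : α₁ := X₁ ω₀ with hx₀
  set a : α₂ × α₃ := (X₂ ω₀, X₃ ω₀) with ha
  set y : α₃ × α₄ := (X₃ ω₀, X₄ ω₀) with hy
  have hPx : 0 < ∑ ω ∈ univ.filter (fun ω => X₁ ω = x₀), p ω := by
    refine lt_of_lt_of_le hω₀ (Finset.single_le_sum (fun ω _ => hp0 ω) ?_)
    simp [hx₀]
  have hPa : 0 < ∑ ω ∈ univ.filter (fun ω => (X₂ ω, X₃ ω) = a), p ω := by
    refine lt_of_lt_of_le hω₀ (Finset.single_le_sum (fun ω _ => hp0 ω) ?_)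
    simp [ha]
  -- any message value of positive probability occurs together with (X₃, X₄) = y
  have hkey : ∀ w : α₀, 0 < (∑ ω ∈ univ.filter (fun ω => W ω = w), p ω) →
      0 < ∑ ω ∈ univ.filter (fun ω => W ω = w ∧ (X₃ ω, X₄ ω) = y), p ω := by
    intro w hw
    have hpair : (∑ ω ∈ univ.filter (fun ω => (W ω, X₁ ω) = (w, x₀)), p ω)
        = (∑ ω ∈ univ.filter (fun ω => W ω = w), p ω)
          * (∑ ω ∈ univ.filter (fun ω => X₁ ω = x₀), p ω) := by
      rw [← hWX w x₀]
      refine Finset.sum_congr (Finset.filter_congr ?_) fun _ _ => rfl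
      intro ω _; simp [Prod.mk.injEq]
    have hposprod : 0 < ∑ ω ∈ univ.filter
        (fun ω => (X₂ ω, X₃ ω) = a ∧ (W ω, X₁ ω) = (w, x₀)), p ω := by
      rw [hind a (w, x₀), hpair]
      positivity
    refine lt_of_lt_of_le hposprod (Finset.sum_le_sum_of_subset_of_nonneg ?_
      fun ω _ _ => hp0 ω)
    intro ω hω
    simp only [ha, hy, Finset.mem_filter, Finset.mem_univ, true_and, Prod.mk.injEq] at hω ⊢
    obtain ⟨⟨h2, h3⟩, hww, h1⟩ := hω
    refine ⟨hww, h3, ?_⟩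
    rw [hf ω, hf ω₀, h1, h2, hx₀]
  -- hence all positive-probability message values coincide
  have huniq : ∀ w w' : α₀, 0 < (∑ ω ∈ univ.filter (fun ω => W ω = w), p ω) →
      0 < (∑ ω ∈ univ.filter (fun ω => W ω = w'), p ω) → w = w' := by
    intro w w' hw hw'
    exact condEnt_eq_zero_imp p hp0 W (fun ω => (X₃ ω, X₄ ω)) hdec w w' y
      (hkey w hw) (hkey w' hw')
  set w₀ : α₀ := W ω₀ with hw₀
  have hposw₀ : 0 < ∑ ω ∈ univ.filter (fun ω => W ω = w₀), p ω := by
    refine lt_of_lt_of_le hω₀ (Finset.single_le_sum (fun ω _ => hp0 ω) ?_)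
    simp [hw₀]
  have hzero : ∀ w : α₀, w ≠ w₀ → (∑ ω ∈ univ.filter (fun ω => W ω = w), p ω) = 0 := by
    intro w hne
    by_contra hc
    have : 0 < ∑ ω ∈ univ.filter (fun ω => W ω = w), p ω :=
      lt_of_le_of_ne (Finset.sum_nonneg fun ω _ => hp0 ω) (Ne.symm hc)
    exact hne (huniq w w₀ this hposw₀)
  have htot : ∑ w : α₀, (∑ ω ∈ univ.filter (fun ω => W ω = w), p ω) = 1 := by
    rw [Finset.sum_fiberwise univ W p]; exact hp1
  have hone : (∑ ω ∈ univ.filter (fun ω => W ω = w₀), p ω) = 1 := by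
    rw [← htot, eq_comm]
    rw [Finset.sum_eq_single w₀ (fun w _ hne => hzero w hne) (fun h => absurd (Finset.mem_univ w₀) h)]
  rw [ent]
  refine Finset.sum_eq_zero fun w _ => ?_
  by_cases hcase : w = w₀
  · rw [hcase, hone]; simp
  · rw [hzero w hcase]; simp
end

section
/- Let M₁, M₂, M₁₂, k be nonnegative integers with M₁ ≤ M₁₂, M₂ ≤ M₁₂, M₁₂ ≤ M₁ + M₂, and k < M₁ + M₂ - M₁₂. Then the polytope { (R₁,R₂) ∈ ℝ²≥0 : R₁ ≤ M₁ - k, R₂ ≤ M₂ - k, R₁ + R₂ ≤ M₁₂ - k } equals the convex hull of the points (0,0), (M₁ - k, 0), (0, M₂ - k), (M₁ - k, M₁₂ - M₁), and (M₁₂ - M₂, M₂ - k). -/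
/-- Auxiliary: a point on the segment between two points of a convex hull
is in the convex hull. -/
lemma hull_seg_aux {S : Set (ℝ × ℝ)} {u v p : ℝ × ℝ}
    (hu : u ∈ convexHull ℝ S) (hv : v ∈ convexHull ℝ S) (t : ℝ)
    (h0 : 0 ≤ t) (h1 : t ≤ 1) (hp : p = (1 - t) • u + t • v) :
    p ∈ convexHull ℝ S := by
  rw [hp]
  exact (convex_convexHull ℝ S) hu hv (by linarith) h0 (by ring)

/-- Auxiliary: the polytope is convex. -/
lemma poly_convex_aux (a b s : ℝ) :
    Convex ℝ {p : ℝ × ℝ | 0 ≤ p.1 ∧ 0 ≤ p.2 ∧ p.1 ≤ a ∧ p.2 ≤ b ∧ p.1 + p.2 ≤ s} := by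
  rintro q ⟨hq1, hq2, hq3, hq4, hq5⟩ r ⟨hr1, hr2, hr3, hr4, hr5⟩ σ τ hσ hτ hστ
  simp only [Set.mem_setOf_eq, Prod.fst_add, Prod.snd_add, Prod.smul_fst, Prod.smul_snd,
    smul_eq_mul]
  refine ⟨add_nonneg (mul_nonneg hσ hq1) (mul_nonneg hτ hr1),
    add_nonneg (mul_nonneg hσ hq2) (mul_nonneg hτ hr2), ?_, ?_, ?_⟩
  · nlinarith [mul_le_mul_of_nonneg_left hq3 hσ, mul_le_mul_of_nonneg_left hr3 hτ]
  · nlinarith [mul_le_mul_of_nonneg_left hq4 hσ, mul_le_mul_of_nonneg_left hr4 hτ]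
  · nlinarith [mul_le_mul_of_nonneg_left hq5 hσ, mul_le_mul_of_nonneg_left hr5 hτ]

set_option maxHeartbeats 1000000 in
/-- In Case 2 (`k < M₁ + M₂ - M₁₂`), the secure capacity
polytope equals the convex hull of its five corner points. -/
theorem secure_capacity_corner_points (M₁ M₂ M₁₂ k : ℕ)
    (h1 : M₁ ≤ M₁₂) (h2 : M₂ ≤ M₁₂) (h3 : M₁₂ ≤ M₁ + M₂)
    (hcase : k + M₁₂ < M₁ + M₂) :
    {p : ℝ × ℝ | 0 ≤ p.1 ∧ 0 ≤ p.2 ∧ p.1 ≤ (M₁ : ℝ) - k ∧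
        p.2 ≤ (M₂ : ℝ) - k ∧ p.1 + p.2 ≤ (M₁₂ : ℝ) - k} =
      convexHull ℝ
        {((0 : ℝ), (0 : ℝ)), ((M₁ : ℝ) - k, 0), (0, (M₂ : ℝ) - k),
          ((M₁ : ℝ) - k, (M₁₂ : ℝ) - M₁), ((M₁₂ : ℝ) - M₂, (M₂ : ℝ) - k)} := by
  have hk1 : k < M₁ := by omega
  have hk2 : k < M₂ := by omega
  set a : ℝ := (M₁ : ℝ) - k with ha_def
  set b : ℝ := (M₂ : ℝ) - k with hb_def
  set s : ℝ := (M₁₂ : ℝ) - k with hs_def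
  have ha : 0 < a := by
    have : (k : ℝ) < M₁ := by exact_mod_cast hk1
    rw [ha_def]; linarith
  have hb : 0 < b := by
    have : (k : ℝ) < M₂ := by exact_mod_cast hk2
    rw [hb_def]; linarith
  have has : a ≤ s := by
    have : (M₁ : ℝ) ≤ M₁₂ := by exact_mod_cast h1
    rw [ha_def, hs_def]; linarith
  have hbs : b ≤ s := by
    have : (M₂ : ℝ) ≤ M₁₂ := by exact_mod_cast h2
    rw [hb_def, hs_def]; linarith
  have habs : s < a + b := by
    rw [ha_def, hb_def, hs_def]
    have : (k : ℝ) + M₁₂ < M₁ + M₂ := by exact_mod_cast hcase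
    linarith
  have hC1 : (M₁₂ : ℝ) - M₁ = s - a := by rw [ha_def, hs_def]; ring
  have hC2 : (M₁₂ : ℝ) - M₂ = s - b := by rw [hb_def, hs_def]; ring
  rw [hC1, hC2]
  clear_value a b s
  set S : Set (ℝ × ℝ) :=
    {((0 : ℝ), (0 : ℝ)), (a, 0), (0, b), (a, s - a), (s - b, b)} with hS_def
  have hO : ((0 : ℝ), (0 : ℝ)) ∈ convexHull ℝ S :=
    subset_convexHull ℝ S (by rw [hS_def]; left; rfl)
  have hA : ((a : ℝ), (0 : ℝ)) ∈ convexHull ℝ S :=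
    subset_convexHull ℝ S (by rw [hS_def]; right; left; rfl)
  have hB : ((0 : ℝ), b) ∈ convexHull ℝ S :=
    subset_convexHull ℝ S (by rw [hS_def]; right; right; left; rfl)
  have hC : ((a : ℝ), s - a) ∈ convexHull ℝ S :=
    subset_convexHull ℝ S (by rw [hS_def]; right; right; right; left; rfl)
  have hD : ((s - b : ℝ), b) ∈ convexHull ℝ S :=
    subset_convexHull ℝ S (by rw [hS_def]; right; right; right; right; rfl)
  ext p
  simp only [Set.mem_setOf_eq]
  constructor
  · rintro ⟨hx0, hy0, hxa, hyb, hxy⟩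
    -- left endpoint of horizontal slice
    have hL : ((0 : ℝ), p.2) ∈ convexHull ℝ S := by
      refine hull_seg_aux hO hB (p.2 / b) (by positivity) (by rw [div_le_one hb]; linarith) ?_
      have hbne : b ≠ 0 := ne_of_gt hb
      apply Prod.ext <;> simp <;> field_simp
    by_cases hy : p.2 ≤ s - a
    · -- right endpoint is (a, p.2) on segment A C
      have hR : ((a : ℝ), p.2) ∈ convexHull ℝ S := by
        by_cases hsa : s - a = 0
        · have hp2 : p.2 = 0 := le_antisymm (by linarith) hy0
          rw [hp2]; exact hA
        · have hsa' : 0 < s - a := lt_of_le_of_ne (by linarith) (Ne.symm hsa)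
          refine hull_seg_aux hA hC (p.2 / (s - a)) (by positivity)
            (by rw [div_le_one hsa']; linarith) ?_
          apply Prod.ext <;> simp <;> field_simp <;> ring
      refine hull_seg_aux hL hR (p.1 / a) (by positivity)
        (by rw [div_le_one ha]; linarith) ?_
      have hane : a ≠ 0 := ne_of_gt ha
      apply Prod.ext <;> simp <;> field_simp <;> ring
    · push_neg at hy
      -- right endpoint is (s - p.2, p.2) on segment C D
      have hR : ((s - p.2 : ℝ), p.2) ∈ convexHull ℝ S := by
        refine hull_seg_aux hC hD ((p.2 - (s - a)) / (a + b - s)) ?_ ?_ ?_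
        · apply div_nonneg (by linarith) (by linarith)
        · rw [div_le_one (by linarith)]; linarith
        · have hden : a + b - s ≠ 0 := by linarith
          apply Prod.ext <;> simp <;> field_simp [hden] <;> ring
      by_cases hx : p.1 = 0
      · have : p = ((0 : ℝ), p.2) := by
          apply Prod.ext <;> simp [hx]
        rw [this]; exact hL
      · have hx' : 0 < p.1 := lt_of_le_of_ne hx0 (Ne.symm hx)
        have hsy : 0 < s - p.2 := by linarith
        refine hull_seg_aux hL hR (p.1 / (s - p.2)) (by positivity)
          (by rw [div_le_one hsy]; linarith) ?_
        have hsyne : s - p.2 ≠ 0 := ne_of_gt hsy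
        apply Prod.ext <;> simp <;> field_simp [hsyne] <;> ring
  · intro hp
    have hsub : S ⊆ {p : ℝ × ℝ | 0 ≤ p.1 ∧ 0 ≤ p.2 ∧ p.1 ≤ a ∧ p.2 ≤ b ∧ p.1 + p.2 ≤ s} := by
      rw [hS_def]
      rintro q (rfl | rfl | rfl | rfl | rfl) <;>
        refine ⟨by simp; try linarith, by simp; try linarith, by simp; try linarith,
          by simp; try linarith, by simp; try linarith⟩
    have hconv := poly_convex_aux a b s
    exact convexHull_min hsub hconv hp
end
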